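/- Let s be as in the context (any of the four cases). Let 2 ≤ k ≤ D+1, let η, η₁ ∈ Δ̄_K^k and η₂ ∈ (Δ̄_K)₊ with η = η₁ + η₂. Then η ∈ Δ^O, i.e. row(sη) ≠ row(η) and col(sη) ≠ col(η). -/

import Mathlib

/- Common framework: type A_l root system realized in ℝ^{ℕ} (coordinates 1,…,l+1 used),
   the Weyl group as permutations of ℕ acting by permuting coordinates, and the
   Weyl group element s = s₁s₂ of Proposition 4.2 (all four parity cases). -/

noncomputable section

namespace DPW

/-- The ambient vector space (only coordinates 1,…,l+1 are used). -/
abbrev V : Type := ℕ → ℝ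

/-- Standard basis vector e_i. -/
def evec (i : ℕ) : V := fun j => if j = i then 1 else 0

/-- The root e_i − e_j. -/
def rt (i j : ℕ) : V := evec i - evec j

/-- The root system Δ of type A_l. -/
def Delta (l : ℕ) : Set V :=
  {v | ∃ i j, 1 ≤ i ∧ i ≤ l + 1 ∧ 1 ≤ j ∧ j ≤ l + 1 ∧ i ≠ j ∧ v = rt i j}

/-- Positive roots Δ₊. -/
def DeltaPos (l : ℕ) : Set V :=
  {v | ∃ i j, 1 ≤ i ∧ i < j ∧ j ≤ l + 1 ∧ v = rt i j}

/-- Negative roots Δ₋ = −Δ₊. -/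
def DeltaNeg (l : ℕ) : Set V := {v | -v ∈ DeltaPos l}

/-- Action of a permutation on V : (σ·v)_j = v_{σ⁻¹(j)}. -/
def pact (σ : Equiv.Perm ℕ) (v : V) : V := fun j => v (σ⁻¹ j)

/-- row(e_a − e_b) = a. -/
def rowOf (v : V) : ℕ := sInf {a | v a = 1}

/-- col(e_a − e_b) = b. -/
def colOf (v : V) : ℕ := sInf {b | v b = (-1 : ℝ)}

/-- Product of the simple reflections s_{α_i} = (i, i+1) for i in a list. -/
def swapProd (idxs : List ℕ) : Equiv.Perm ℕ :=
  (idxs.map (fun i => Equiv.swap i (i + 1))).prod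

/-- The Weyl group element s = s₁s₂ (cases (i)–(iv) according to the parities of
    m = ⌊(l′−1)/2⌋ and l′; here p = l − l′ and s_γ = (m+1, m+p+2)). -/
def weylS (l l' : ℕ) : Equiv.Perm ℕ :=
  let m := (l' - 1) / 2
  let p := l - l'
  if m % 2 = 0 then
    if l' % 2 = 1 then
      -- case (i)
      (swapProd (List.range' 2 (m / 2) 2) * swapProd (List.range' (m + p + 2) (m / 2) 2)) *
        (swapProd (List.range' 1 (m / 2) 2) * Equiv.swap (m + 1) (m + p + 2) *
          swapProd (List.range' (m + p + 3) (m / 2) 2))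
    else
      -- case (ii)
      (swapProd (List.range' 2 (m / 2) 2) * swapProd (List.range' (m + p + 2) (m / 2 + 1) 2)) *
        (swapProd (List.range' 1 (m / 2) 2) * Equiv.swap (m + 1) (m + p + 2) *
          swapProd (List.range' (m + p + 3) (m / 2) 2))
  else
    if l' % 2 = 1 then
      -- case (iii)
      (swapProd (List.range' 1 ((m + 1) / 2) 2) *
          swapProd (List.range' (m + p + 2) ((m + 1) / 2) 2)) *
        (swapProd (List.range' 2 ((m - 1) / 2) 2) * Equiv.swap (m + 1) (m + p + 2) *
          swapProd (List.range' (m + p + 3) ((m - 1) / 2) 2))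
    else
      -- case (iv)
      (swapProd (List.range' 1 ((m + 1) / 2) 2) *
          swapProd (List.range' (m + p + 2) ((m + 1) / 2) 2)) *
        (swapProd (List.range' 2 ((m - 1) / 2) 2) * Equiv.swap (m + 1) (m + p + 2) *
          swapProd (List.range' (m + p + 3) ((m + 1) / 2) 2))

/-- Δ_s = {α ∈ Δ₊ : sα ∈ Δ₋}. -/
def DeltaS (l : ℕ) (s : Equiv.Perm ℕ) : Set V :=
  {v ∈ DeltaPos l | pact s v ∈ DeltaNeg l}

/-- Δ_{s⁻¹} = {α ∈ Δ₊ : s⁻¹α ∈ Δ₋}. -/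
def DeltaSinv (l : ℕ) (s : Equiv.Perm ℕ) : Set V :=
  {v ∈ DeltaPos l | pact s⁻¹ v ∈ DeltaNeg l}

/-- (Δ̄_K)₊ = {α ∈ Δ₊ : sα ≠ α}. -/
def DeltaKpos (l : ℕ) (s : Equiv.Perm ℕ) : Set V :=
  {v ∈ DeltaPos l | pact s v ≠ v}

/-- (Δ̄_K)₋ = −(Δ̄_K)₊. -/
def DeltaKneg (l : ℕ) (s : Equiv.Perm ℕ) : Set V := {v | -v ∈ DeltaKpos l s}

/-- Δ^C = {α ∈ (Δ̄_K)₊ : row(sα) = row(α)}. -/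
def DeltaC (l : ℕ) (s : Equiv.Perm ℕ) : Set V :=
  {v ∈ DeltaKpos l s | rowOf (pact s v) = rowOf v}

/-- Δ^R = {α ∈ (Δ̄_K)₊ : col(sα) = col(α)}. -/
def DeltaR (l : ℕ) (s : Equiv.Perm ℕ) : Set V :=
  {v ∈ DeltaKpos l s | colOf (pact s v) = colOf v}

/-- Δ^O = (Δ̄_K)₊ \ (Δ^C ∪ Δ^R). -/
def DeltaO (l : ℕ) (s : Equiv.Perm ℕ) : Set V :=
  DeltaKpos l s \ (DeltaC l s ∪ DeltaR l s)

/-- Δ₁^O = {α ∈ Δ^O : row(α) ≥ m+p+2}. -/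
def DeltaO1 (l : ℕ) (s : Equiv.Perm ℕ) (m p : ℕ) : Set V :=
  {v ∈ DeltaO l s | m + p + 2 ≤ rowOf v}

/-- Δ₂^O = {α ∈ Δ^O : col(α) ≤ m+1}. -/
def DeltaO2 (l : ℕ) (s : Equiv.Perm ℕ) (m : ℕ) : Set V :=
  {v ∈ DeltaO l s | colOf v ≤ m + 1}

/-- Δ₃^O = Δ^O \ (Δ₁^O ∪ Δ₂^O). -/
def DeltaO3 (l : ℕ) (s : Equiv.Perm ℕ) (m p : ℕ) : Set V :=
  DeltaO l s \ (DeltaO1 l s m p ∪ DeltaO2 l s m)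

/-- Δ̄_K^k = {α ∈ (Δ̄_K)₊ : s^{−j}α ∈ (Δ̄_K)₊ for 1 ≤ j ≤ k−1 and s^{−k}α ∈ (Δ̄_K)₋}. -/
def DeltaKk (l : ℕ) (s : Equiv.Perm ℕ) (k : ℕ) : Set V :=
  {v ∈ DeltaKpos l s |
    (∀ j, 1 ≤ j → j ≤ k - 1 → pact (s⁻¹ ^ j) v ∈ DeltaKpos l s) ∧
      pact (s⁻¹ ^ k) v ∈ DeltaKneg l s}

/-- d(α) = min{k ≥ 1 : s^{−k}α ∈ Δ₋}. -/
def dd (l : ℕ) (s : Equiv.Perm ℕ) (v : V) : ℕ :=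
  sInf {k | 1 ≤ k ∧ pact (s⁻¹ ^ k) v ∈ DeltaNeg l}

/-- Δ_Z = {e_i − e_j : m+2 ≤ i, j ≤ m+p+1, i ≠ j}. -/
def DeltaZ (m p : ℕ) : Set V :=
  {v | ∃ i j, m + 2 ≤ i ∧ i ≤ m + p + 1 ∧ m + 2 ≤ j ∧ j ≤ m + p + 1 ∧ i ≠ j ∧ v = rt i j}

/-- The ⟨s⟩-orbit of a vector. -/
def orbitOf (s : Equiv.Perm ℕ) (v : V) : Set V := {w | ∃ n : ℤ, w = pact (s ^ n) v}

/-- The set P_κ (for κ ∈ Δ̄_K^k). -/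
def Pk (l : ℕ) (s : Equiv.Perm ℕ) (k : ℕ) (κ : V) : Set (V × V) :=
  {q | (∃ i, 2 ≤ i ∧ i ≤ k - 1 ∧ q.1 ∈ DeltaKk l s i) ∧ q.2 ∈ DeltaKk l s k ∧ κ = q.1 + q.2}

/-- The set P′_κ (for κ ∈ Δ̄_K^k). -/
def Pk' (l : ℕ) (s : Equiv.Perm ℕ) (k : ℕ) (κ : V) : Set (V × V) :=
  {q | q.1 ∈ DeltaKk l s k ∧ q.2 ∈ DeltaKk l s k ∧ κ = q.1 + q.2}

/-- The eigenvector v^λ of case (i) (m even, l′ = 2m+1 odd). -/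
def vlam (m p : ℕ) (lam : ℂ) : ℕ → ℂ := fun j =>
  if j = 0 then 0
  else if j ≤ m + 1 then
    (if j % 2 = 1 then lam ^ ((4 * m + 5 - j) / 2) else lam ^ (j / 2))
  else if j ≤ m + p + 1 then 0
  else if j ≤ m + p + m + 2 then
    (if (j - (m + p)) % 2 = 0 then lam ^ ((m + (j - (m + p))) / 2)
     else lam ^ ((3 * m + 5 - (j - (m + p))) / 2))
  else 0

/- Off the block `Z = {m+2, …, m+p+1}`, which it fixes pointwise, `s` permutes
`L = {1, …, m+1}` and `R = {m+p+2, …, l+1}` in a single cycle.  For a positive root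
`e_a − e_b`, the layer `k` with `e_a − e_b ∈ Δ̄_K^k` is the first time at which `s^{-k}`
reverses the order of `a` and `b`.  If `a` is fixed then `a ∈ Z`, so `k` is the time the backward
orbit of `b` needs to leave `R`; if `b` is fixed, `k` is the time the backward orbit of `a` needs
to leave `L`.  In a decomposition `η = η₁ + η₂` with `η, η₁ ∈ Δ̄_K^k`, a fixed end of `η` therefore
either gives two distinct points the same exit time, or makes the pair of `η₁` reverse its order
too early or too late, which a look at the two ends of the cycle rules out. -/

theorem rt_ne_zero {i j : ℕ} (hij : i ≠ j) : rt i j ≠ 0 := by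
  intro h
  have := congrFun h i
  simp only [rt, evec, Pi.sub_apply, Pi.zero_apply, if_neg hij] at this
  norm_num at this

theorem rt_self (i : ℕ) : rt i i = 0 := sub_self _

theorem rt_inj {i j i' j' : ℕ} (hij : i ≠ j) (h : rt i j = rt i' j') : i = i' ∧ j = j' := by
  have hi := congrFun h i
  have hj := congrFun h j
  simp only [rt, evec, Pi.sub_apply] at hi hj
  split_ifs at hi hj <;> (try norm_num at hi) <;> (try norm_num at hj) <;> omega

theorem rt_add_rt (a b c : ℕ) : rt a b + rt b c = rt a c := by
  simp only [rt]; abel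

theorem neg_rt (i j : ℕ) : -rt i j = rt j i := by
  simp only [rt, neg_sub]

theorem pact_rt (σ : Equiv.Perm ℕ) (i j : ℕ) : pact σ (rt i j) = rt (σ i) (σ j) := by
  funext x
  simp only [pact, rt, evec, Pi.sub_apply, Equiv.Perm.inv_eq_iff_eq]

theorem rowOf_rt {i j : ℕ} (hij : i ≠ j) : rowOf (rt i j) = i := by
  have : {a | rt i j a = 1} = {i} := by
    ext x
    simp only [rt, evec, Pi.sub_apply, Set.mem_ofPred_eq, Set.mem_singleton_iff]
    split_ifs <;> norm_num <;> omega
  rw [rowOf, this, csInf_singleton]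

theorem colOf_rt {i j : ℕ} (hij : i ≠ j) : colOf (rt i j) = j := by
  have : {b | rt i j b = (-1 : ℝ)} = {j} := by
    ext x
    simp only [rt, evec, Pi.sub_apply, Set.mem_ofPred_eq, Set.mem_singleton_iff]
    split_ifs <;> norm_num <;> omega
  rw [colOf, this, csInf_singleton]

theorem rt_eq_rt_add_rt {a b a₁ b₁ a₂ b₂ : ℕ} (hab : a ≠ b) (h₁ : a₁ ≠ b₁) (h₂ : a₂ ≠ b₂)
    (h : rt a b = rt a₁ b₁ + rt a₂ b₂) :
    (a₁ = a ∧ b₁ = a₂ ∧ b₂ = b) ∨ (a₂ = a ∧ b₂ = a₁ ∧ b₁ = b) := by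
  by_cases ha₁ : a₁ = a
  · subst ha₁
    rw [← rt_add_rt a₁ b₁ b] at h
    have h' := add_left_cancel h
    obtain rfl | hb₁ := eq_or_ne b₁ b
    · exact absurd (h'.symm.trans (rt_self _)) (rt_ne_zero h₂)
    · obtain ⟨rfl, rfl⟩ := rt_inj hb₁ h'
      exact Or.inl ⟨rfl, rfl, rfl⟩
  · have ha₂ : a₂ = a := by
      have := congrFun h a
      simp only [rt, evec, Pi.add_apply, Pi.sub_apply, if_neg hab,
        if_neg (Ne.symm ha₁)] at this
      split_ifs at this <;> norm_num at this <;> omega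
    subst ha₂
    rw [add_comm, ← rt_add_rt a₂ b₂ b] at h
    have h' := add_left_cancel h
    obtain rfl | hb₂ := eq_or_ne b₂ b
    · exact absurd (h'.symm.trans (rt_self _)) (rt_ne_zero h₁)
    · obtain ⟨rfl, rfl⟩ := rt_inj hb₂ h'
      exact Or.inr ⟨rfl, rfl, rfl⟩

theorem lt_of_rt_mem_DeltaPos {l x y : ℕ} (h : rt x y ∈ DeltaPos l) : x < y := by
  obtain ⟨i, j, -, hij, -, he⟩ := h
  obtain ⟨rfl, rfl⟩ := rt_inj hij.ne he.symm
  exact hij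

theorem rt_mem_DeltaO {l a b : ℕ} {s : Equiv.Perm ℕ} (h : rt a b ∈ DeltaKpos l s)
    (ha : s a ≠ a) (hb : s b ≠ b) : rt a b ∈ DeltaO l s := by
  have hab : a ≠ b := (lt_of_rt_mem_DeltaPos h.1).ne
  have hsab : s a ≠ s b := s.injective.ne hab
  refine ⟨h, ?_⟩
  rintro (⟨-, hrow⟩ | ⟨-, hcol⟩)
  · rw [pact_rt, rowOf_rt hsab, rowOf_rt hab] at hrow
    exact ha hrow
  · rw [pact_rt, colOf_rt hsab, colOf_rt hab] at hcol
    exact hb hcol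

def IsInversionTime (s : Equiv.Perm ℕ) (k x y : ℕ) : Prop :=
  (∀ j, 1 ≤ j → j ≤ k - 1 → (s⁻¹ ^ j) x < (s⁻¹ ^ j) y) ∧ (s⁻¹ ^ k) y < (s⁻¹ ^ k) x

theorem isInversionTime_of_rt_mem_DeltaKk {l k x y : ℕ} {s : Equiv.Perm ℕ}
    (h : rt x y ∈ DeltaKk l s k) : IsInversionTime s k x y := by
  refine ⟨fun j hj₁ hj₂ => ?_, ?_⟩
  · have := (h.2.1 j hj₁ hj₂).1
    rw [pact_rt] at this
    exact lt_of_rt_mem_DeltaPos this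
  · have := h.2.2.1
    rw [pact_rt, neg_rt] at this
    exact lt_of_rt_mem_DeltaPos this

theorem inv_pow_apply_eq_self {α : Type*} {σ : Equiv.Perm α} {x : α} (h : σ x = x) (j : ℕ) :
    (σ⁻¹ ^ j) x = x :=
  Equiv.Perm.pow_apply_eq_self_of_apply_eq_self (Equiv.Perm.inv_eq_iff_eq.mpr h.symm) j

theorem swapProd_range'_apply (n a x : ℕ) :
    swapProd (List.range' a n 2) x =
      if a ≤ x ∧ x < a + 2 * n then (if (x - a) % 2 = 0 then x + 1 else x - 1) else x := by
  induction n generalizing a with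
  | zero => simp [swapProd]
  | succ n ih =>
    rw [List.range'_succ]
    simp only [swapProd, List.map_cons, List.prod_cons, Equiv.Perm.mul_apply] at ih ⊢
    rw [ih, Equiv.swap_apply_def]
    split_ifs <;> omega

/-- `weylS l l'` in closed form; `r = l' - m` is the size of `R = {m+p+2, …, m+p+1+r}`. -/
def weylFun (m p r x : ℕ) : ℕ :=
  if 1 ≤ x ∧ x ≤ m + 1 then
    if (m + x) % 2 = 1 then (if x = m + 1 then m + p + 3 else x + 2)
    else (if 3 ≤ x then x - 2 else 3 - x)
  else if m + p + 2 ≤ x ∧ x ≤ m + p + 1 + r then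
    if x = m + p + 2 then m
    else if (x - (m + p + 1)) % 2 = 0 then
      (if x - (m + p + 1) + 2 ≤ r then x + 2 else if x - (m + p + 1) < r then x + 1 else x - 1)
    else x - 2
  else x

set_option maxHeartbeats 1000000 in
theorem weylS_apply_of_even {l l' m p r : ℕ} (h5 : 5 ≤ l') (hm : m = (l' - 1) / 2)
    (hp : p = l - l') (heven : Even m) (hr : r = l' - m) (x : ℕ) :
    weylS l l' x = weylFun m p r x := by
  obtain ⟨c, hc⟩ := heven
  simp only [weylS, ← hm, ← hp, if_pos (by omega : m % 2 = 0)]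
  have hm2 : 2 ≤ m := by omega
  obtain ⟨hl', hr'⟩ | ⟨hl', hr'⟩ : l' = 2 * m + 1 ∧ r = m + 1 ∨ l' = 2 * m + 2 ∧ r = m + 2 := by
    omega
  on_goal 1 => rw [if_pos (by omega : l' % 2 = 1)]
  on_goal 2 => rw [if_neg (by omega : ¬l' % 2 = 1)]
  all_goals
    clear hm hp hr hl' h5
    simp only [Equiv.Perm.mul_apply]
  -- Evaluate the factors from the inside out, pruning contradictory branches after each one:
  -- splitting on all of them at once is far too slow.
  all_goals
    rw [swapProd_range'_apply _ (m + p + 3)]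
    split_ifs <;> try omega
  all_goals
    rw [Equiv.swap_apply_def]
    split_ifs <;> try omega
  all_goals
    rw [swapProd_range'_apply _ 1]
    split_ifs <;> try omega
  all_goals
    rw [swapProd_range'_apply _ (m + p + 2)]
    split_ifs <;> try omega
  all_goals
    rw [swapProd_range'_apply _ 2]
    split_ifs <;> try omega
  all_goals
    rw [weylFun]
    split_ifs <;> omega

set_option maxHeartbeats 1000000 in
theorem weylS_apply_of_odd {l l' m p r : ℕ} (h5 : 5 ≤ l') (hm : m = (l' - 1) / 2)
    (hp : p = l - l') (hodd : Odd m) (hr : r = l' - m) (x : ℕ) :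
    weylS l l' x = weylFun m p r x := by
  obtain ⟨c, hc⟩ := hodd
  simp only [weylS, ← hm, ← hp, if_neg (by omega : ¬m % 2 = 0)]
  have hm2 : 2 ≤ m := by omega
  obtain ⟨hl', hr'⟩ | ⟨hl', hr'⟩ : l' = 2 * m + 1 ∧ r = m + 1 ∨ l' = 2 * m + 2 ∧ r = m + 2 := by
    omega
  on_goal 1 => rw [if_pos (by omega : l' % 2 = 1)]
  on_goal 2 => rw [if_neg (by omega : ¬l' % 2 = 1)]
  all_goals
    clear hm hp hr hl' h5
    simp only [Equiv.Perm.mul_apply]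
  all_goals
    rw [swapProd_range'_apply _ (m + p + 3)]
    split_ifs <;> try omega
  all_goals
    rw [Equiv.swap_apply_def]
    split_ifs <;> try omega
  all_goals
    rw [swapProd_range'_apply _ 2]
    split_ifs <;> try omega
  all_goals
    rw [swapProd_range'_apply _ (m + p + 2)]
    split_ifs <;> try omega
  all_goals
    rw [swapProd_range'_apply _ 1]
    split_ifs <;> try omega
  all_goals
    rw [weylFun]
    split_ifs <;> omega

theorem weylS_apply {l l' m p r : ℕ} (h5 : 5 ≤ l') (hm : m = (l' - 1) / 2) (hp : p = l - l')
    (hr : r = l' - m) (x : ℕ) : weylS l l' x = weylFun m p r x := by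
  rcases Nat.even_or_odd m with h | h
  exacts [weylS_apply_of_even h5 hm hp h hr x, weylS_apply_of_odd h5 hm hp h hr x]

/-- The cycle of `weylS` through `m + p + 3`: it climbs `m+p+3, m+p+5, …` in `R`, comes back
down through the other points of `R` to `m + p + 2` (at `t = r - 1`), then descends `m, m-2, …`
in `L` and climbs back to `m + 1` (at `t = m + r`). -/
def cyc (m p r t : ℕ) : ℕ :=
  if t < r then (if 2 * t + 2 ≤ r then m + p + 3 + 2 * t else m + p + 2 * (r - t))
  else (if 2 * (t - r) < m then m - 2 * (t - r) else 2 * (t - r) + 1 - m)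

section Cycle

variable {m p r : ℕ}

theorem cyc_mem_right {t : ℕ} (ht : t < r) :
    m + p + 2 ≤ cyc m p r t ∧ cyc m p r t ≤ m + p + 1 + r := by
  unfold cyc; split_ifs <;> omega

theorem cyc_mem_left {t : ℕ} (h₁ : r ≤ t) (h₂ : t < m + 1 + r) :
    1 ≤ cyc m p r t ∧ cyc m p r t ≤ m + 1 := by
  unfold cyc; split_ifs <;> omega

theorem cyc_le {t : ℕ} (ht : t < m + 1 + r) : cyc m p r t ≤ m + p + 1 + r := by
  unfold cyc; split_ifs <;> omega

theorem cyc_injOn : Set.InjOn (cyc m p r) (Set.Iio (m + 1 + r)) := by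
  intro t₁ h₁ t₂ h₂ h
  rw [Set.mem_Iio] at h₁ h₂
  revert h; unfold cyc; split_ifs <;> omega

theorem exists_cyc_eq {x : ℕ} (hx : (1 ≤ x ∧ x ≤ m + 1) ∨ (m + p + 2 ≤ x ∧ x ≤ m + p + 1 + r)) :
    ∃ t < m + 1 + r, cyc m p r t = x := by
  rcases hx with ⟨h₁, h₂⟩ | ⟨h₁, h₂⟩
  · rcases Nat.even_or_odd (m + x) with ⟨c, hc⟩ | ⟨c, hc⟩
    · exact ⟨r + (c - x), by omega, by unfold cyc; split_ifs <;> omega⟩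
    · exact ⟨r + c, by omega, by unfold cyc; split_ifs <;> omega⟩
  · rcases Nat.even_or_odd (x - (m + p + 1)) with ⟨c, hc⟩ | ⟨c, hc⟩
    · exact ⟨c - 1, by omega, by unfold cyc; split_ifs <;> omega⟩
    · exact ⟨r - (c + 1), by omega, by unfold cyc; split_ifs <;> omega⟩

theorem cyc_zero (hr : 2 ≤ r) : cyc m p r 0 = m + p + 3 := by
  unfold cyc; split_ifs <;> omega

theorem cyc_sub_one (hr : 0 < r) : cyc m p r (r - 1) = m + p + 2 := by
  unfold cyc; split_ifs <;> omega

theorem cyc_self (hm : 0 < m) : cyc m p r r = m := by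
  unfold cyc; split_ifs <;> omega

theorem cyc_last : cyc m p r (m + r) = m + 1 := by
  unfold cyc; split_ifs <;> omega

theorem weylFun_cyc {t : ℕ} (hm : 0 < m) (ht : t + 1 < m + 1 + r) :
    weylFun m p r (cyc m p r t) = cyc m p r (t + 1) := by
  unfold cyc
  split_ifs <;> try omega
  all_goals
    unfold weylFun
    split_ifs <;> omega

theorem weylFun_cyc_last (hr : 2 ≤ r) :
    weylFun m p r (cyc m p r (m + r)) = cyc m p r 0 := by
  rw [cyc_last, cyc_zero hr, weylFun]
  split_ifs <;> omega

end Cycle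

section Zigzag

variable {s : Equiv.Perm ℕ} {m p r : ℕ}

theorem apply_cyc_succ (hs : ∀ x, s x = weylFun m p r x) (hm : 0 < m) {t : ℕ}
    (ht : t + 1 < m + 1 + r) :
    s (cyc m p r t) = cyc m p r (t + 1) :=
  (hs _).trans (weylFun_cyc hm ht)

theorem apply_cyc_last (hs : ∀ x, s x = weylFun m p r x) (hr : 2 ≤ r) :
    s (cyc m p r (m + r)) = cyc m p r 0 :=
  (hs _).trans (weylFun_cyc_last hr)

theorem inv_pow_apply_cyc_of_le (hs : ∀ x, s x = weylFun m p r x) (hm : 0 < m) {j u : ℕ}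
    (hj : j ≤ u) (hu : u < m + 1 + r) :
    (s⁻¹ ^ j) (cyc m p r u) = cyc m p r (u - j) := by
  induction j with
  | zero => rfl
  | succ j ih =>
    rw [pow_succ', Equiv.Perm.mul_apply, ih (by omega), Equiv.Perm.inv_eq_iff_eq,
      apply_cyc_succ hs hm (by omega)]
    congr 1
    omega

theorem inv_pow_apply_cyc_of_lt (hs : ∀ x, s x = weylFun m p r x) (hm : 0 < m)
    (hr : 2 ≤ r) {j u : ℕ} (hu : u < m + 1 + r) (hj₁ : u < j)
    (hj₂ : j ≤ u + (m + 1 + r)) :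
    (s⁻¹ ^ j) (cyc m p r u) = cyc m p r (u + (m + 1 + r) - j) := by
  obtain ⟨i, rfl⟩ : ∃ i, j = i + 1 + u := ⟨j - u - 1, by omega⟩
  rw [pow_add, Equiv.Perm.mul_apply, inv_pow_apply_cyc_of_le hs hm le_rfl hu, Nat.sub_self,
    pow_succ, Equiv.Perm.mul_apply, Equiv.Perm.inv_eq_iff_eq.mpr (apply_cyc_last hs hr).symm,
    inv_pow_apply_cyc_of_le hs hm (j := i) (u := m + r) (by omega) (by omega)]
  congr 1
  omega

theorem exists_cyc_of_apply_ne (hs : ∀ x, s x = weylFun m p r x) {x : ℕ} (hx : s x ≠ x) :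
    ∃ t < m + 1 + r, cyc m p r t = x := by
  refine exists_cyc_eq (not_not.mp fun h => hx ?_)
  rw [hs, weylFun, if_neg fun h' => h (Or.inl h'), if_neg fun h' => h (Or.inr h')]

theorem mem_Z_of_apply_eq_self (hs : ∀ x, s x = weylFun m p r x) {x : ℕ} (hx : s x = x)
    (h₁ : 1 ≤ x) (h₂ : x ≤ m + p + 1 + r) : m + 1 < x ∧ x < m + p + 2 := by
  rw [hs, weylFun] at hx
  split_ifs at hx <;> omega

theorem isInversionTime_of_apply_left_eq_self (hs : ∀ x, s x = weylFun m p r x) (hm : 0 < m)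
    (hr : 2 ≤ r) {k a b : ℕ} (ha : s a = a) (hab : a < b)
    (h : IsInversionTime s k a b) : m + 1 < a ∧ ∃ u < r, b = cyc m p r u ∧ k = u + 1 := by
  have hk := h.2
  rw [inv_pow_apply_eq_self ha] at hk
  have hb : s b ≠ b := fun hb => by rw [inv_pow_apply_eq_self hb] at hk; omega
  obtain ⟨u, hu, rfl⟩ := exists_cyc_of_apply_ne hs hb
  have ha' := mem_Z_of_apply_eq_self hs ha (by omega) (hab.le.trans (cyc_le hu))
  have hur : u < r := by
    by_contra h'
    have : cyc m p r u ≤ m + 1 := (cyc_mem_left (not_lt.mp h') hu).2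
    omega
  refine ⟨ha'.1, u, hur, rfl, ?_⟩
  rcases lt_trichotomy k (u + 1) with hlt | heq | hgt
  · rw [inv_pow_apply_cyc_of_le hs hm (j := k) (by omega) hu] at hk
    have : m + p + 2 ≤ cyc m p r (u - k) := (cyc_mem_right (by omega)).1
    omega
  · exact heq
  · have h₁ := h.1 (u + 1) (by omega) (by omega)
    rw [inv_pow_apply_eq_self ha,
      inv_pow_apply_cyc_of_lt hs hm hr (j := u + 1) hu (by omega) (by omega),
      show u + (m + 1 + r) - (u + 1) = m + r by omega, cyc_last] at h₁
    omega

theorem isInversionTime_of_apply_right_eq_self (hs : ∀ x, s x = weylFun m p r x) (hm : 0 < m)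
    (hr : 2 ≤ r) {k a b : ℕ} (hb : s b = b) (hab : a < b)
    (hbr : b ≤ m + p + 1 + r) (h : IsInversionTime s k a b) :
    b < m + p + 2 ∧ ∃ w, r ≤ w ∧ w < m + 1 + r ∧ a = cyc m p r w ∧ k = w - r + 1 := by
  have hk := h.2
  rw [inv_pow_apply_eq_self hb] at hk
  have ha : s a ≠ a := fun ha => by rw [inv_pow_apply_eq_self ha] at hk; omega
  obtain ⟨w, hw, rfl⟩ := exists_cyc_of_apply_ne hs ha
  have hb' := mem_Z_of_apply_eq_self hs hb (by omega) hbr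
  have hrw : r ≤ w := by
    by_contra h'
    have : m + p + 2 ≤ cyc m p r w := (cyc_mem_right (not_le.mp h')).1
    omega
  refine ⟨hb'.2, w, hrw, hw, rfl, ?_⟩
  rcases lt_trichotomy k (w - r + 1) with hlt | heq | hgt
  · rw [inv_pow_apply_cyc_of_le hs hm (j := k) (by omega) hw] at hk
    have : cyc m p r (w - k) ≤ m + 1 := (cyc_mem_left (by omega) (by omega)).2
    omega
  · exact heq
  · have h₁ := h.1 (w - r + 1) (by omega) (by omega)
    rw [inv_pow_apply_eq_self hb, inv_pow_apply_cyc_of_le hs hm (j := w - r + 1) (by omega) hw,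
      show w - (w - r + 1) = r - 1 by omega, cyc_sub_one (by omega)] at h₁
    omega

theorem not_isInversionTime_cyc_right (hs : ∀ x, s x = weylFun m p r x) (hm : 0 < m)
    (hr : r = m + 1 ∨ r = m + 2) {u w : ℕ} (hu : u < r) (hw : w < r) (hu₁ : 1 ≤ u)
    (hwu : cyc m p r w < cyc m p r u) :
    ¬IsInversionTime s (u + 1) (cyc m p r w) (cyc m p r u) := by
  have hr₂ : 2 ≤ r := by omega
  rintro ⟨hbefore, hat⟩
  rcases le_or_gt (u + 1) w with hle | hlt
  · -- at time `u` the larger point reaches `m + p + 3`, so the smaller one must sit at `m + p + 2`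
    have h₁ := hbefore u hu₁ (by omega)
    rw [inv_pow_apply_cyc_of_le hs hm (j := u) (u := w) (by omega) (by omega),
      inv_pow_apply_cyc_of_le hs hm le_rfl (by omega), Nat.sub_self, cyc_zero (by omega)] at h₁
    have : m + p + 2 ≤ cyc m p r (w - u) := (cyc_mem_right (by omega)).1
    have := cyc_injOn (m := m) (p := p) (Set.mem_Iio.2 (by omega)) (Set.mem_Iio.2 (by omega))
      ((cyc_sub_one (by omega)).trans (by omega : m + p + 2 = cyc m p r (w - u)))
    omega
  · -- at time `u + 1` the larger point reaches `m + 1 = max L`, so the smaller one is still in `R`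
    rw [inv_pow_apply_cyc_of_lt hs hm hr₂ (j := u + 1) (u := u) (by omega) (by omega) (by omega),
      inv_pow_apply_cyc_of_lt hs hm hr₂ (by omega) hlt (by omega),
      show u + (m + 1 + r) - (u + 1) = m + r by omega, cyc_last] at hat
    have hR : w + (m + 1 + r) - (u + 1) < r := by
      by_contra h'
      have : cyc m p r (w + (m + 1 + r) - (u + 1)) ≤ m + 1 :=
        (cyc_mem_left (not_lt.mp h') (by omega)).2
      omega
    obtain rfl : w = 0 := by omega
    rw [show u = r - 1 by omega, cyc_zero (by omega), cyc_sub_one (by omega)] at hwu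
    omega

theorem not_isInversionTime_cyc_left (hs : ∀ x, s x = weylFun m p r x) (hm : 0 < m)
    (hr : r = m + 1 ∨ r = m + 2) {v w : ℕ} (hw : r ≤ w) (hwN : w < m + 1 + r) (hv : r ≤ v)
    (hvN : v < m + 1 + r) (hk : 2 ≤ w - r + 1) :
    ¬IsInversionTime s (w - r + 1) (cyc m p r w) (cyc m p r v) := by
  rintro ⟨hbefore, hat⟩
  -- the first point is at `m` one step before leaving `L`, and the second never exceeds `m + 1`
  have h₁ := hbefore (w - r) (by omega) (by omega)
  rw [inv_pow_apply_cyc_of_le hs hm (j := w - r) (by omega) hwN,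
    inv_pow_apply_cyc_of_le hs hm (j := w - r) (by omega) hvN,
    show w - (w - r) = r by omega, cyc_self hm] at h₁
  rw [inv_pow_apply_cyc_of_le hs hm (j := w - r + 1) (by omega) hwN,
    inv_pow_apply_cyc_of_le hs hm (j := w - r + 1) (by omega) hvN,
    show w - (w - r + 1) = r - 1 by omega, cyc_sub_one (by omega)] at hat
  have hL : r ≤ v - (w - r + 1) := by
    by_contra h'
    have : m + p + 2 ≤ cyc m p r (v - (w - r + 1)) := (cyc_mem_right (not_le.mp h')).1
    omega
  have : cyc m p r (v - (w - r)) ≤ m + 1 := (cyc_mem_left (by omega) (by omega)).2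
  have := cyc_injOn (m := m) (p := p) (Set.mem_Iio.2 (by omega)) (Set.mem_Iio.2 (by omega))
    (cyc_last.trans (by omega : m + 1 = cyc m p r (v - (w - r))))
  omega

theorem not_isInversionTime_of_apply_left_eq_self (hs : ∀ x, s x = weylFun m p r x)
    (hm : 0 < m) (hr : r = m + 1 ∨ r = m + 2) {k a b c : ℕ} (ha : s a = a) (hk : 2 ≤ k)
    (hac : a < c) (hcb : c < b)
    (h : IsInversionTime s k a c ∨ (IsInversionTime s k c b ∧ s c ≠ c)) :
    ¬IsInversionTime s k a b := by
  have hr₂ : 2 ≤ r := by omega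
  intro hab
  obtain ⟨ha', u, hu, rfl, rfl⟩ :=
    isInversionTime_of_apply_left_eq_self hs hm hr₂ ha (hac.trans hcb) hab
  rcases h with hac' | ⟨hcb', hc⟩
  · obtain ⟨-, u', -, rfl, hu'⟩ := isInversionTime_of_apply_left_eq_self hs hm hr₂ ha hac hac'
    obtain rfl : u' = u := by omega
    exact lt_irrefl _ hcb
  · obtain ⟨w, hw, rfl⟩ := exists_cyc_of_apply_ne hs hc
    have hwr : w < r := by
      by_contra h'
      have : cyc m p r w ≤ m + 1 := (cyc_mem_left (not_lt.mp h') hw).2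
      omega
    exact not_isInversionTime_cyc_right hs hm hr hu hwr (by omega) hcb hcb'

theorem not_isInversionTime_of_apply_right_eq_self (hs : ∀ x, s x = weylFun m p r x)
    (hm : 0 < m) (hr : r = m + 1 ∨ r = m + 2) {k a b c : ℕ} (hb : s b = b) (hk : 2 ≤ k)
    (hac : a < c) (hcb : c < b) (hbr : b ≤ m + p + 1 + r)
    (h : (IsInversionTime s k a c ∧ s c ≠ c) ∨ IsInversionTime s k c b) :
    ¬IsInversionTime s k a b := by
  have hr₂ : 2 ≤ r := by omega
  intro hab
  obtain ⟨hb', w, hw, hwN, rfl, rfl⟩ :=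
    isInversionTime_of_apply_right_eq_self hs hm hr₂ hb (hac.trans hcb) hbr hab
  rcases h with ⟨hac', hc⟩ | hcb'
  · obtain ⟨v, hv, rfl⟩ := exists_cyc_of_apply_ne hs hc
    have hrv : r ≤ v := by
      by_contra h'
      have : m + p + 2 ≤ cyc m p r v := (cyc_mem_right (not_le.mp h')).1
      omega
    exact not_isInversionTime_cyc_left hs hm hr hw hwN hrv hv hk hac'
  · obtain ⟨-, v, -, -, rfl, hv⟩ :=
      isInversionTime_of_apply_right_eq_self hs hm hr₂ hb hcb hbr hcb'
    obtain rfl : v = w := by omega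
    exact lt_irrefl _ hac

end Zigzag

/-- for k ≥ 2, if η, η₁ ∈ Δ̄_K^k, η₂ ∈ (Δ̄_K)₊ and η = η₁ + η₂, then
η ∈ Δ^O. -/
theorem stmt13 (l l' m p : ℕ) (h5 : 5 ≤ l') (hll : l' ≤ l)
    (hm : m = (l' - 1) / 2) (hp : p = l - l') :
    let s := weylS l l'
    ∀ k, 2 ≤ k → ∀ η ∈ DeltaKk l s k, ∀ η₁ ∈ DeltaKk l s k, ∀ η₂ ∈ DeltaKpos l s,
      η = η₁ + η₂ → η ∈ DeltaO l s := by
  intro s k hk η hη η₁ hη₁ η₂ hη₂ hsum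
  have hs : ∀ x, s x = weylFun m p (l' - m) x := weylS_apply h5 hm hp rfl
  have hm₀ : 0 < m := by omega
  have hr : l' - m = m + 1 ∨ l' - m = m + 2 := by omega
  obtain ⟨a, b, -, hab, hbl, rfl⟩ := hη.1.1
  obtain ⟨a₁, b₁, -, hab₁, -, rfl⟩ := hη₁.1.1
  obtain ⟨⟨a₂, b₂, -, hab₂, -, rfl⟩, hmoved₂⟩ := hη₂
  have hbr : b ≤ m + p + 1 + (l' - m) := by omega
  have hinv := isInversionTime_of_rt_mem_DeltaKk hη
  have hinv₁ := isInversionTime_of_rt_mem_DeltaKk hη₁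
  refine rt_mem_DeltaO hη.1 (fun ha => ?_) (fun hb => ?_) <;>
    rcases rt_eq_rt_add_rt hab.ne hab₁.ne hab₂.ne hsum with ⟨rfl, rfl, rfl⟩ | ⟨rfl, rfl, rfl⟩
  · exact not_isInversionTime_of_apply_left_eq_self hs hm₀ hr ha hk hab₁ hab₂ (Or.inl hinv₁) hinv
  · exact not_isInversionTime_of_apply_left_eq_self hs hm₀ hr ha hk hab₂ hab₁
      (Or.inr ⟨hinv₁, fun hc => hmoved₂ (by rw [pact_rt, ha, hc])⟩) hinv
  · exact not_isInversionTime_of_apply_right_eq_self hs hm₀ hr hb hk hab₁ hab₂ hbr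
      (Or.inl ⟨hinv₁, fun hc => hmoved₂ (by rw [pact_rt, hc, hb])⟩) hinv
  · exact not_isInversionTime_of_apply_right_eq_self hs hm₀ hr hb hk hab₂ hab₁ hbr
      (Or.inr hinv₁) hinv

end DPW
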